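/- arXiv:1602.08863 — 3 statements merged into one kernel-verified Lean document; each statement's English description precedes it below -/
import Mathlib

section
/- Let n be a power of 2, n = 2m, and ω = e^(2πi/n) a primitive n-th root of unity. For a vector x : Fin n → ℂ, define its discrete Fourier transform y_j = Σ_{k=0}^{n-1} x_k ω^(kj). Let q be the DFT of the even-indexed subvector (x_0, x_2, …, x_{n-2}) and t the DFT of the odd-indexed subvector (x_1, x_3, …, x_{n-1}), both computed with root ω². Then for all j with 0 ≤ j < n, y_j = q_{j mod m} + ω^j · t_{j mod m}. -/
open Complex Finset

lemma sum_range_even_odd {M : Type*} [AddCommMonoid M] (f : ℕ → M) (m : ℕ) :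
    ∑ k ∈ Finset.range (2 * m), f k
      = (∑ k ∈ Finset.range m, f (2 * k)) + ∑ k ∈ Finset.range m, f (2 * k + 1) := by
  induction m with
  | zero => simp
  | succ m ih =>
    rw [Nat.mul_succ, Finset.sum_range_succ, Finset.sum_range_succ,
      Finset.sum_range_succ, Finset.sum_range_succ, ih]
    abel

theorem fft_recursive_decomposition
    (n m : ℕ) (hpow : ∃ k : ℕ, n = 2 ^ k) (hnm : n = 2 * m) (hm : 0 < m)
    (ω : ℂ) (hω : ω = Complex.exp (2 * Real.pi * Complex.I / n))
    (x y : Fin n → ℂ) (q t : Fin m → ℂ)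
    (hy : ∀ j : Fin n, y j = ∑ k : Fin n, x k * ω ^ ((k : ℕ) * (j : ℕ)))
    (hq : ∀ j : Fin m, q j =
      ∑ k : Fin m, x ⟨2 * k.1, by have := k.2; omega⟩ * (ω ^ 2) ^ ((k : ℕ) * (j : ℕ)))
    (ht : ∀ j : Fin m, t j =
      ∑ k : Fin m, x ⟨2 * k.1 + 1, by have := k.2; omega⟩ * (ω ^ 2) ^ ((k : ℕ) * (j : ℕ))) :
    ∀ j : Fin n,
      y j = q ⟨(j : ℕ) % m, Nat.mod_lt _ hm⟩ + ω ^ (j : ℕ) * t ⟨(j : ℕ) % m, Nat.mod_lt _ hm⟩ := by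
  have hn : 0 < n := by omega
  have hωn : ω ^ n = 1 := by
    rw [hω, ← Complex.exp_nat_mul]
    have : (n : ℂ) ≠ 0 := Nat.cast_ne_zero.mpr hn.ne'
    rw [mul_div_cancel₀ _ this, Complex.exp_two_pi_mul_I]
  intro j
  have hkey : ∀ k : ℕ, ω ^ (2 * k * (j : ℕ)) = (ω ^ 2) ^ (k * ((j : ℕ) % m)) := by
    intro k
    have hdiv : 2 * k * (j : ℕ) = 2 * (k * ((j : ℕ) % m)) + n * (k * ((j : ℕ) / m)) := by
      have := Nat.mod_add_div (j : ℕ) m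
      calc 2 * k * (j : ℕ) = 2 * k * ((j : ℕ) % m + m * ((j : ℕ) / m)) := by rw [this]
        _ = 2 * (k * ((j : ℕ) % m)) + (2 * m) * (k * ((j : ℕ) / m)) := by ring
        _ = _ := by rw [← hnm]
    rw [hdiv, pow_add, pow_mul ω n, hωn, one_pow, mul_one, pow_mul]
  set f : ℕ → ℂ := fun k => if h : k < n then x ⟨k, h⟩ else 0 with hf
  have hx : ∀ (k : ℕ) (h : k < n), x ⟨k, h⟩ = f k := by
    intro k h; simp [hf, h]
  rw [hy, hq, ht]
  have e1 : ∑ k : Fin n, x k * ω ^ ((k : ℕ) * (j : ℕ))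
      = ∑ k ∈ Finset.range n, f k * ω ^ (k * (j : ℕ)) := by
    rw [Finset.sum_range (f := fun k => f k * ω ^ (k * (j : ℕ)))]
    exact Finset.sum_congr rfl fun k _ => by rw [← hx k k.2]
  have e2 : ∑ k : Fin m, x ⟨2 * k.1, by have := k.2; omega⟩ * (ω ^ 2) ^ ((k : ℕ) * ((j : ℕ) % m))
      = ∑ k ∈ Finset.range m, f (2 * k) * (ω ^ 2) ^ (k * ((j : ℕ) % m)) := by
    rw [Finset.sum_range (f := fun k => f (2 * k) * (ω ^ 2) ^ (k * ((j : ℕ) % m)))]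
    exact Finset.sum_congr rfl fun k _ => by rw [← hx (2 * k.1) (by have := k.2; omega)]
  have e3 : ∑ k : Fin m, x ⟨2 * k.1 + 1, by have := k.2; omega⟩ * (ω ^ 2) ^ ((k : ℕ) * ((j : ℕ) % m))
      = ∑ k ∈ Finset.range m, f (2 * k + 1) * (ω ^ 2) ^ (k * ((j : ℕ) % m)) := by
    rw [Finset.sum_range (f := fun k => f (2 * k + 1) * (ω ^ 2) ^ (k * ((j : ℕ) % m)))]
    exact Finset.sum_congr rfl fun k _ => by rw [← hx (2 * k.1 + 1) (by have := k.2; omega)]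
  rw [e1, e2, e3]
  have hn2 : Finset.range n = Finset.range (2 * m) := by rw [hnm]
  rw [hn2, sum_range_even_odd (fun k => f k * ω ^ (k * (j : ℕ))) m, Finset.mul_sum]
  congr 1
  · exact Finset.sum_congr rfl fun k _ => by rw [hkey k]
  · refine Finset.sum_congr rfl fun k _ => ?_
    rw [mul_comm (ω ^ (j : ℕ)), mul_assoc]
    congr 1
    rw [← hkey k, ← pow_add]
    congr 1
    ring
end

section
/- Define a binary partial operation merge on a type of behaviour trees: merge is idempotent (merge B B = B), commutative where defined, and for branching terms, merge of p&{l_i : B_i}_{i∈I} and p&{l_j : B'_j}_{j∈J} is p&{l_k : C_k}_{k∈I∪J} where C_k = merge B_k B'_k for k ∈ I ∩ J, C_k = B_k for k ∈ I \ J, and C_k = B'_k for k ∈ J \ I. Prove that merge, so defined on finitely-branching labelled trees with label-indexed branching nodes, is associative where defined: if merge (merge A B) C is defined then merge A (merge B C) is defined and they are equal. -/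
/-- Behaviour trees: non-branching constructor nodes with a list of children,
and branching nodes carrying a (label-indexed) map from labels to subtrees. -/
inductive BT (C L : Type) where
  | node : C → List (BT C L) → BT C L
  | branch : (L → Option (BT C L)) → BT C L

/-!
Merging acts componentwise: children of a constructor node are merged position by position,
branches of a branching node label by label, a label present on one side only being kept as it
is. Idempotency, commutativity and associativity of a partial operation therefore lift from
subtrees to lists of children and to label maps, and structural induction on the left operand
carries them to whole trees.
-/

section PartialMerge

variable {α : Type*} (m : α → α → Option α)

def CommAt (a : α) : Prop :=
  ∀ b r, m a b = some r → m b a = some r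

def AssocAt (a : α) : Prop :=
  ∀ b c ab r, m a b = some ab → m ab c = some r → ∃ bc, m b c = some bc ∧ m a bc = some r

def mergeList : List α → List α → Option (List α)
  | [], [] => some []
  | a :: as, b :: bs => (m a b).bind fun c => (mergeList as bs).map (c :: ·)
  | _, _ => none

/-- An inner `none` is an absent label, an outer `none` a failed merge. -/
def mergeOption : Option α → Option α → Option (Option α)
  | some a, some b => (m a b).map some
  | o, none => some o
  | none, o => some o

variable {m}

@[simp]
theorem mergeList_nil_nil : mergeList m [] [] = some [] := rfl

@[simp]
theorem mergeList_cons_cons_eq_some {a b : α} {as bs us : List α} :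
    mergeList m (a :: as) (b :: bs) = some us ↔
      ∃ c cs, m a b = some c ∧ mergeList m as bs = some cs ∧ us = c :: cs := by
  simp only [mergeList, Option.bind_eq_some_iff, Option.map_eq_some_iff]
  aesop

@[simp]
theorem mergeList_nil_cons (b : α) (bs : List α) : mergeList m [] (b :: bs) = none := rfl

@[simp]
theorem mergeList_cons_nil (a : α) (as : List α) : mergeList m (a :: as) [] = none := rfl

theorem mergeList_eq_some_iff {as bs us : List α} :
    mergeList m as bs = some us ↔
      us.length = as.length ∧ bs.length = as.length ∧
        ∀ (i : ℕ) (h₁ : i < as.length) (h₂ : i < bs.length) (h₃ : i < us.length),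
          m (as.get ⟨i, h₁⟩) (bs.get ⟨i, h₂⟩) = some (us.get ⟨i, h₃⟩) := by
  induction as generalizing bs us with
  | nil => cases bs <;> cases us <;> simp
  | cons a as ih =>
    cases bs with
    | nil => simp
    | cons b bs =>
      cases us with
      | nil => simp
      | cons u us =>
        simp only [mergeList_cons_cons_eq_some, List.cons.injEq, ih, List.length_cons]
        constructor
        · rintro ⟨c, cs, hc, ⟨hlen, hlen', hget⟩, rfl, rfl⟩
          refine ⟨by omega, by omega, ?_⟩
          rintro (_ | i) h₁ h₂ h₃
          exacts [hc, hget i _ _ _]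
        · rintro ⟨hlen, hlen', hget⟩
          exact ⟨u, us, hget 0 (by omega) (by omega) (by omega),
            ⟨by omega, by omega, fun i _ _ _ => hget (i + 1) (by omega) (by omega) (by omega)⟩,
            rfl, rfl⟩

theorem mergeList_self {as : List α} (h : ∀ a ∈ as, m a a = some a) :
    mergeList m as as = some as := by
  induction as with
  | nil => rfl
  | cons a as ih => simp_all

theorem mergeList_comm {as bs us : List α} (h : ∀ a ∈ as, CommAt m a)
    (hab : mergeList m as bs = some us) : mergeList m bs as = some us := by
  induction as generalizing bs us with
  | nil => cases bs <;> simp_all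
  | cons a as ih =>
    cases bs with
    | nil => simp at hab
    | cons b bs =>
      obtain ⟨c, cs, hc, hcs, rfl⟩ := mergeList_cons_cons_eq_some.1 hab
      simp_all [CommAt]

theorem mergeList_assoc {as bs cs abs rs : List α} (h : ∀ a ∈ as, AssocAt m a)
    (hab : mergeList m as bs = some abs) (habc : mergeList m abs cs = some rs) :
    ∃ bcs, mergeList m bs cs = some bcs ∧ mergeList m as bcs = some rs := by
  induction as generalizing bs cs abs rs with
  | nil => cases bs <;> cases cs <;> simp_all
  | cons a as ih =>
    cases bs with
    | nil => simp at hab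
    | cons b bs =>
      obtain ⟨ab, abs, hab', habs, rfl⟩ := mergeList_cons_cons_eq_some.1 hab
      cases cs with
      | nil => simp at habc
      | cons c cs =>
        obtain ⟨r, rs, hr, hrs, rfl⟩ := mergeList_cons_cons_eq_some.1 habc
        obtain ⟨bc, hbc, habc⟩ := h a List.mem_cons_self b c ab r hab' hr
        obtain ⟨bcs, hbcs, habcs⟩ := ih (fun a ha => h a (List.mem_cons_of_mem _ ha)) habs hrs
        exact ⟨bc :: bcs, by simp [hbc, hbcs], by simp [habc, habcs]⟩

@[simp]
theorem mergeOption_none_left (o : Option α) : mergeOption m none o = some o := by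
  cases o <;> rfl

@[simp]
theorem mergeOption_none_right (o : Option α) : mergeOption m o none = some o := by
  cases o <;> rfl

@[simp]
theorem mergeOption_some_some (a b : α) : mergeOption m (some a) (some b) = (m a b).map some :=
  rfl

theorem mergeOption_self {o : Option α} (h : ∀ a ∈ o, m a a = some a) :
    mergeOption m o o = some o := by
  cases o <;> simp_all

theorem mergeOption_comm {o o' r : Option α} (h : ∀ a ∈ o, CommAt m a)
    (hoo' : mergeOption m o o' = some r) : mergeOption m o' o = some r := by
  rcases o with _ | a <;> rcases o' with _ | b <;> simp only [mergeOption_none_left,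
    mergeOption_none_right, mergeOption_some_some, Option.some.injEq, Option.map_eq_some_iff]
      at hoo' ⊢
  all_goals aesop (add norm CommAt)

theorem mergeOption_assoc {oa ob oc oab r : Option α} (h : ∀ a ∈ oa, AssocAt m a)
    (hab : mergeOption m oa ob = some oab) (habc : mergeOption m oab oc = some r) :
    ∃ obc, mergeOption m ob oc = some obc ∧ mergeOption m oa obc = some r := by
  rcases oa with _ | a
  · obtain rfl : ob = oab := by simpa using hab
    exact ⟨r, habc, by simp⟩
  rcases ob with _ | b
  · obtain rfl : some a = oab := by simpa using hab
    exact ⟨oc, by simp, habc⟩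
  rw [mergeOption_some_some, Option.map_eq_some_iff] at hab
  obtain ⟨ab, hab, rfl⟩ := hab
  rcases oc with _ | c
  · exact ⟨some b, by simp, by simpa [hab] using habc⟩
  rw [mergeOption_some_some, Option.map_eq_some_iff] at habc
  obtain ⟨r, hr, rfl⟩ := habc
  obtain ⟨bc, hbc, habc⟩ := h a rfl b c ab r hab hr
  exact ⟨some bc, by simp [hbc], by simp [habc]⟩

theorem mergeOption_eq_some_iff {x y z : Option α} :
    mergeOption m x y = some z ↔
      (∀ a b, x = some a → y = some b → (m a b).isSome) ∧ z = (mergeOption m x y).join := by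
  rcases x with _ | a <;> rcases y with _ | b <;> simp
  all_goals try exact eq_comm
  cases m a b <;> simp [eq_comm]

theorem forall_mergeOption_eq_some_iff {ι : Type*} {f g h : ι → Option α} :
    (∀ i, mergeOption m (f i) (g i) = some (h i)) ↔
      (∀ i a b, f i = some a → g i = some b → (m a b).isSome) ∧
        h = fun i => (mergeOption m (f i) (g i)).join := by
  simp only [mergeOption_eq_some_iff, forall_and, funext_iff]

end PartialMerge

namespace BT

variable {C L : Type}

theorem induction {P : BT C L → Prop} (node : ∀ c ts, (∀ t ∈ ts, P t) → P (.node c ts))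
    (branch : ∀ f, (∀ l, ∀ t ∈ f l, P t) → P (.branch f)) (t : BT C L) : P t := by
  refine BT.rec (motive_1 := P) (motive_2 := fun ts => ∀ t ∈ ts, P t)
    (motive_3 := fun o => ∀ t ∈ o, P t) node (fun f ih => branch f ih) ?_ ?_ ?_ ?_ t
  · simp
  · intro t ts ht hts
    simpa [ht] using hts
  · simp
  · intro t ht
    simpa using ht

structure IsMerge (merge : BT C L → BT C L → Option (BT C L)) : Prop where
  node_eq_some_iff : ∀ c ts t r, merge (.node c ts) t = some r ↔
    ∃ ts' us, t = .node c ts' ∧ r = .node c us ∧ mergeList merge ts ts' = some us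
  branch_eq_some_iff : ∀ f t r, merge (.branch f) t = some r ↔
    ∃ g h, t = .branch g ∧ r = .branch h ∧ ∀ l, mergeOption merge (f l) (g l) = some (h l)

namespace IsMerge

variable {merge : BT C L → BT C L → Option (BT C L)}

theorem merge_self (hm : IsMerge merge) (t : BT C L) : merge t t = some t := by
  induction t using BT.induction with
  | node c ts ih => exact (hm.node_eq_some_iff ..).2 ⟨ts, ts, rfl, rfl, mergeList_self ih⟩
  | branch f ih =>
    exact (hm.branch_eq_some_iff ..).2 ⟨f, f, rfl, rfl, fun l => mergeOption_self (ih l)⟩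

theorem commAt (hm : IsMerge merge) (t : BT C L) : CommAt merge t := by
  induction t using BT.induction with
  | node c ts ih =>
    intro t' r h
    obtain ⟨ts', us, rfl, rfl, hts⟩ := (hm.node_eq_some_iff ..).1 h
    exact (hm.node_eq_some_iff ..).2 ⟨ts, us, rfl, rfl, mergeList_comm ih hts⟩
  | branch f ih =>
    intro t' r h
    obtain ⟨g, k, rfl, rfl, hfg⟩ := (hm.branch_eq_some_iff ..).1 h
    exact (hm.branch_eq_some_iff ..).2
      ⟨f, k, rfl, rfl, fun l => mergeOption_comm (ih l) (hfg l)⟩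

theorem assocAt (hm : IsMerge merge) (t : BT C L) : AssocAt merge t := by
  induction t using BT.induction with
  | node c ts ih =>
    intro t₁ t₂ t₀₁ r h₀₁ h
    obtain ⟨ts₁, us, rfl, rfl, hts₀₁⟩ := (hm.node_eq_some_iff ..).1 h₀₁
    obtain ⟨ts₂, vs, rfl, rfl, hts⟩ := (hm.node_eq_some_iff ..).1 h
    obtain ⟨ws, h₁₂, h₀₁₂⟩ := mergeList_assoc ih hts₀₁ hts
    exact ⟨.node c ws, (hm.node_eq_some_iff ..).2 ⟨ts₂, ws, rfl, rfl, h₁₂⟩,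
      (hm.node_eq_some_iff ..).2 ⟨ws, vs, rfl, rfl, h₀₁₂⟩⟩
  | branch f ih =>
    intro t₁ t₂ t₀₁ r h₀₁ h
    obtain ⟨f₁, f₀₁, rfl, rfl, hf₀₁⟩ := (hm.branch_eq_some_iff ..).1 h₀₁
    obtain ⟨f₂, fr, rfl, rfl, hf⟩ := (hm.branch_eq_some_iff ..).1 h
    choose k h₁₂ h₀₁₂ using fun l => mergeOption_assoc (ih l) (hf₀₁ l) (hf l)
    exact ⟨.branch k, (hm.branch_eq_some_iff ..).2 ⟨f₂, k, rfl, rfl, h₁₂⟩,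
      (hm.branch_eq_some_iff ..).2 ⟨k, fr, rfl, rfl, h₀₁₂⟩⟩

end IsMerge

end BT

open Classical in
theorem merge_idem_comm_assoc {C L : Type}
    (merge : BT C L → BT C L → Option (BT C L))
    (h_node : ∀ (c c' : C) (ts ts' : List (BT C L)) (r : BT C L),
      merge (.node c ts) (.node c' ts') = some r ↔
        (c = c' ∧ ∃ us : List (BT C L), r = .node c us ∧
          us.length = ts.length ∧ ts'.length = ts.length ∧
          ∀ (i : ℕ) (h1 : i < ts.length) (h2 : i < ts'.length) (h3 : i < us.length),
            merge (ts.get ⟨i, h1⟩) (ts'.get ⟨i, h2⟩) = some (us.get ⟨i, h3⟩)))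
    (h_mixed : ∀ (c : C) (ts : List (BT C L)) (f : L → Option (BT C L)),
      merge (.node c ts) (.branch f) = none ∧ merge (.branch f) (.node c ts) = none)
    (h_branch : ∀ f g : L → Option (BT C L),
      merge (.branch f) (.branch g) =
        if ∀ (l : L) (a b : BT C L), f l = some a → g l = some b → (merge a b).isSome = true
        then some (.branch (fun l =>
          match f l, g l with
          | some a, some b => merge a b
          | some a, none => some a
          | none, some b => some b
          | none, none => none))
        else none) :
    (∀ B : BT C L, merge B B = some B) ∧
    (∀ A B r : BT C L, merge A B = some r → merge B A = some r) ∧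
    (∀ A B C' ab r : BT C L, merge A B = some ab → merge ab C' = some r →
      ∃ bc : BT C L, merge B C' = some bc ∧ merge A bc = some r) := by
  have hm : BT.IsMerge merge := by
    refine ⟨fun c ts t r => ?_, fun f t r => ?_⟩
    · cases t with
      | node c' ts' => simp [h_node, mergeList_eq_some_iff, eq_comm]
      | branch g => simp [(h_mixed c ts g).1]
    · cases t with
      | node c ts => simp [(h_mixed c ts f).2]
      | branch g =>
        rw [h_branch]
        split_ifs with hdef
        · simp only [Option.some.injEq, BT.branch.injEq, forall_mergeOption_eq_some_iff,
            exists_and_left, existsAndEq, and_true, exists_eq_left']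
          rw [and_iff_left hdef, eq_comm]
          refine Iff.of_eq (congrArg (fun F => r = BT.branch F) (funext fun l => ?_))
          cases f l <;> cases g l <;> simp
          cases merge _ _ <;> rfl
        · simp only [false_iff]
          rintro ⟨g', k, hg, -, hk⟩
          cases hg
          exact hdef (forall_mergeOption_eq_some_iff.1 hk).1
  exact ⟨hm.merge_self, hm.commAt, hm.assocAt⟩
end

section
/- Consider the rewriting system on lists of 'instructions', each instruction touching a finite set of process names, where adjacent instructions may be swapped whenever their name sets are disjoint. Then the reachability relation generated by these swaps is a congruence, and two instruction lists are inter-reachable if and only if they induce the same relative order on every pair of instructions with intersecting name sets. -/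
/-!
A single swap is witnessed by the transposition of the two swapped positions, and witnesses
compose, so having a position bijection `σ` that matches entries and keeps every conflicting
pair in order is an equivalence relation containing `Swap`. Conversely, given such a `σ` from
`a :: t` to `l`, every instruction of `l` in front of `a = l[σ 0]` comes from a later position of
`a :: t`, so it cannot conflict with `a`; hence `a` can be swapped to the front of `l`, and `σ`
restricted to `t` matches `t` with the rest of `l`, which closes an induction on `t`.
Since `Swap` is stable under appending on either side, its equivalence closure is a congruence.
-/

/-- Adjacent instructions with disjoint process-name sets may be swapped. -/
def Swap {Instr Name : Type*} (pn : Instr → Finset Name) :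
    List Instr → List Instr → Prop :=
  fun l₁ l₂ => ∃ (xs ys : List Instr) (a b : Instr),
    Disjoint (pn a) (pn b) ∧ l₁ = xs ++ a :: b :: ys ∧ l₂ = xs ++ b :: a :: ys

open Relation

theorem Relation.EqvGen.map {α β : Type*} {r : α → α → Prop} {s : β → β → Prop}
    (f : α → β) (hf : ∀ a b, r a b → s (f a) (f b)) {a b : α} (h : EqvGen r a b) :
    EqvGen s (f a) (f b) := by
  induction h with
  | rel _ _ h => exact .rel _ _ (hf _ _ h)
  | refl _ => exact .refl _
  | symm _ _ _ ih => exact .symm _ _ ih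
  | trans _ _ _ _ _ ih₁ ih₂ => exact .trans _ _ _ ih₁ ih₂

theorem Fin.exists_equiv_succAbove_eq {n m : ℕ} (σ : Fin (n + 1) ≃ Fin (m + 1)) :
    ∃ τ : Fin n ≃ Fin m, ∀ i, (σ 0).succAbove (τ i) = σ i.succ :=
  ⟨(finSuccAboveEquiv 0).trans ((σ.subtypeEquiv (p := (· ≠ 0)) (q := (· ≠ σ 0))
      fun _ => σ.injective.ne_iff.symm).trans (finSuccAboveEquiv (σ 0)).symm),
    fun i => congrArg Subtype.val ((finSuccAboveEquiv (σ 0)).apply_symm_apply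
      ⟨σ i.succ, σ.injective.ne (Fin.succ_ne_zero i)⟩)⟩

theorem List.getElem_eraseIdx_succAbove {α : Type*} {l : List α} {n : ℕ} (hl : l.length = n + 1)
    (k : Fin (n + 1)) (j : Fin n) :
    (l.eraseIdx k)[(j : ℕ)]'(by rw [List.length_eraseIdx_of_lt (by omega)]; omega) =
      l[(k.succAbove j : ℕ)]'(by have := (k.succAbove j).isLt; omega) := by
  rw [List.getElem_eraseIdx]
  rcases lt_or_ge j.castSucc k with h | h
  · simp [Fin.succAbove_of_castSucc_lt _ _ h, show (j : ℕ) < k from h]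
  · simp [Fin.succAbove_of_le_castSucc _ _ h, show ¬ (j : ℕ) < k from not_lt.mpr h]

section

variable {Instr Name : Type*} {pn : Instr → Finset Name}

namespace Swap

theorem append_right {l₁ l₂ : List Instr} (h : Swap pn l₁ l₂) (r : List Instr) :
    Swap pn (l₁ ++ r) (l₂ ++ r) := by
  obtain ⟨xs, ys, a, b, hab, rfl, rfl⟩ := h
  exact ⟨xs, ys ++ r, a, b, hab, by simp, by simp⟩

theorem append_left {l₁ l₂ : List Instr} (h : Swap pn l₁ l₂) (r : List Instr) :
    Swap pn (r ++ l₁) (r ++ l₂) := by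
  obtain ⟨xs, ys, a, b, hab, rfl, rfl⟩ := h
  exact ⟨r ++ xs, ys, a, b, hab, by simp, by simp⟩

theorem eqvGen_append {l₁ l₂ l₁' l₂' : List Instr} (h : EqvGen (Swap pn) l₁ l₂)
    (h' : EqvGen (Swap pn) l₁' l₂') : EqvGen (Swap pn) (l₁ ++ l₁') (l₂ ++ l₂') :=
  .trans _ _ _ (h.map (· ++ l₁') fun _ _ hs => hs.append_right l₁')
    (h'.map (l₂ ++ ·) fun _ _ hs => hs.append_left l₂)

theorem eqvGen_cons {l₁ l₂ : List Instr} (x : Instr) (h : EqvGen (Swap pn) l₁ l₂) :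
    EqvGen (Swap pn) (x :: l₁) (x :: l₂) :=
  eqvGen_append (.refl [x]) h

theorem eqvGen_append_cons {a : Instr} {u : List Instr}
    (hu : ∀ x ∈ u, Disjoint (pn x) (pn a)) (v : List Instr) :
    EqvGen (Swap pn) (u ++ a :: v) (a :: (u ++ v)) := by
  induction u with
  | nil => exact .refl _
  | cons x u ih =>
    have hx : Swap pn (x :: a :: (u ++ v)) (a :: x :: (u ++ v)) :=
      ⟨[], u ++ v, x, a, hu x List.mem_cons_self, rfl, rfl⟩
    exact .trans _ _ _ (eqvGen_cons x (ih fun y hy => hu y (.tail x hy))) (.rel _ _ hx)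

end Swap

variable (pn) in
def ConflictMatching (l₁ l₂ : List Instr) (σ : Fin l₁.length ≃ Fin l₂.length) : Prop :=
  (∀ i, l₂.get (σ i) = l₁.get i) ∧
    ∀ i j, i < j → ¬ Disjoint (pn (l₁.get i)) (pn (l₁.get j)) → σ i < σ j

variable (pn) in
def SameConflictOrder (l₁ l₂ : List Instr) : Prop :=
  ∃ σ, ConflictMatching pn l₁ l₂ σ

namespace SameConflictOrder

variable {l₁ l₂ l₃ : List Instr}

theorem refl (l : List Instr) : SameConflictOrder pn l l :=
  ⟨Equiv.refl _, fun _ => rfl, fun _ _ h _ => h⟩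

theorem symm (h : SameConflictOrder pn l₁ l₂) : SameConflictOrder pn l₂ l₁ := by
  obtain ⟨σ, hget, hord⟩ := h
  refine ⟨σ.symm, fun i => by rw [← hget, σ.apply_symm_apply], fun i j hij hdep => ?_⟩
  by_contra! hle
  have hlt := hle.lt_of_ne (σ.symm.injective.ne hij.ne')
  have hdep' : ¬ Disjoint (pn (l₁.get (σ.symm j))) (pn (l₁.get (σ.symm i))) := by
    rwa [← hget, ← hget, σ.apply_symm_apply, σ.apply_symm_apply, disjoint_comm]
  exact hij.not_gt (by simpa using hord _ _ hlt hdep')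

theorem trans (h : SameConflictOrder pn l₁ l₂) (h' : SameConflictOrder pn l₂ l₃) :
    SameConflictOrder pn l₁ l₃ := by
  obtain ⟨σ, hget, hord⟩ := h
  obtain ⟨τ, hget', hord'⟩ := h'
  refine ⟨σ.trans τ, fun i => (hget' (σ i)).trans (hget i), fun i j hij hdep => ?_⟩
  exact hord' _ _ (hord i j hij hdep) (by rwa [hget, hget])

theorem equivalence : Equivalence (SameConflictOrder pn) :=
  ⟨refl, symm, trans⟩

theorem cons (h : SameConflictOrder pn l₁ l₂) (x : Instr) :
    SameConflictOrder pn (x :: l₁) (x :: l₂) := by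
  obtain ⟨σ, hget, hord⟩ := h
  let σ' : Fin (l₁.length + 1) ≃ Fin (l₂.length + 1) :=
    (finSuccEquiv _).trans (σ.optionCongr.trans (finSuccEquiv _).symm)
  have h0 : σ' 0 = 0 := by simp [σ']
  have hsucc : ∀ i, σ' i.succ = (σ i).succ := by simp [σ']
  refine ⟨σ', fun i => ?_, fun i j hij hdep => ?_⟩
  · cases i using Fin.cases with
    | zero => simp [h0]
    | succ i => simpa [hsucc] using hget i
  · cases j using Fin.cases with
    | zero => exact absurd hij (Fin.not_lt_zero _)
    | succ j =>
      cases i using Fin.cases with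
      | zero => simp [h0, hsucc, Fin.succ_pos]
      | succ i => simpa [hsucc] using hord i j (Fin.succ_lt_succ_iff.mp hij) hdep

theorem append_left (h : SameConflictOrder pn l₁ l₂) (r : List Instr) :
    SameConflictOrder pn (r ++ l₁) (r ++ l₂) := by
  induction r with
  | nil => exact h
  | cons x r ih => exact ih.cons x

theorem swap_cons_cons {a b : Instr} (hab : Disjoint (pn a) (pn b)) (l : List Instr) :
    SameConflictOrder pn (a :: b :: l) (b :: a :: l) := by
  refine ⟨Equiv.swap (0 : Fin (l.length + 2)) 1, fun i => ?_, fun i j hij hdep => ?_⟩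
  · rcases i with ⟨_ | _ | k, hk⟩ <;> simp [Equiv.swap_apply_of_ne_of_ne, Fin.ext_iff]
  · rcases i with ⟨_ | _ | i, hi⟩ <;> rcases j with ⟨_ | _ | j, hj⟩ <;>
      simp_all [Fin.lt_def, Equiv.swap_apply_of_ne_of_ne, Fin.ext_iff]

theorem of_swap (h : Swap pn l₁ l₂) : SameConflictOrder pn l₁ l₂ := by
  obtain ⟨xs, ys, a, b, hab, rfl, rfl⟩ := h
  exact (swap_cons_cons hab ys).append_left xs

theorem of_eqvGen (h : EqvGen (Swap pn) l₁ l₂) : SameConflictOrder pn l₁ l₂ :=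
  equivalence.eqvGen_iff.mp (EqvGen.mono (fun _ _ => of_swap) _ _ h)

end SameConflictOrder

namespace ConflictMatching

variable {a : Instr} {t : List Instr}

theorem disjoint_of_mem_take {l : List Instr} {σ : Fin (a :: t).length ≃ Fin l.length}
    (h : ConflictMatching pn (a :: t) l σ) : ∀ x ∈ l.take (σ 0), Disjoint (pn x) (pn a) := by
  obtain ⟨hget, hord⟩ := h
  intro x hx
  obtain ⟨q, hq, rfl⟩ := List.getElem_of_mem hx
  have hq0 : q < σ 0 := by simp only [List.length_take, lt_min_iff] at hq; exact hq.1
  set p : Fin l.length := ⟨q, hq0.trans (σ 0).isLt⟩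
  rw [List.getElem_take]
  by_contra hdep
  have hp : (a :: t)[(σ.symm p : ℕ)] = l[(p : ℕ)] := by
    simpa using (hget (σ.symm p)).symm
  have h0 : 0 < σ.symm p := by
    rw [Fin.pos_iff_ne_zero, Ne, σ.symm_apply_eq]
    exact (show p < σ 0 from hq0).ne
  have := hord 0 _ h0 (by simpa [hp, disjoint_comm] using hdep)
  rw [σ.apply_symm_apply] at this
  exact this.not_gt hq0

theorem sameConflictOrder_eraseIdx {b : Instr} {l : List Instr}
    {σ : Fin (a :: t).length ≃ Fin (b :: l).length}
    (h : ConflictMatching pn (a :: t) (b :: l) σ) :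
    SameConflictOrder pn t ((b :: l).eraseIdx (σ 0)) := by
  obtain ⟨hget, hord⟩ := h
  obtain ⟨τ, hτ⟩ := Fin.exists_equiv_succAbove_eq σ
  have hlen : l.length = ((b :: l).eraseIdx (σ 0)).length := by
    rw [List.length_eraseIdx_of_lt (σ 0).isLt]; rfl
  refine ⟨τ.trans (finCongr hlen), fun i => ?_, fun i j hij hdep => ?_⟩
  · have := List.getElem_eraseIdx_succAbove (l := b :: l) rfl (σ 0) (τ i)
    simp only [Equiv.trans_apply, finCongr_apply, List.get_eq_getElem, Fin.val_cast]
    rw [this]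
    simpa [hτ] using hget i.succ
  · change τ i < τ j
    rw [← Fin.succAbove_lt_succAbove_iff (p := σ 0), hτ, hτ]
    exact hord i.succ j.succ (Fin.succ_lt_succ_iff.mpr hij) hdep

end ConflictMatching

namespace SameConflictOrder

theorem exists_of_cons_left {a : Instr} {t l : List Instr}
    (h : SameConflictOrder pn (a :: t) l) :
    ∃ u v, l = u ++ a :: v ∧ (∀ x ∈ u, Disjoint (pn x) (pn a)) ∧
      SameConflictOrder pn t (u ++ v) := by
  obtain ⟨σ, hσ⟩ := h
  rcases l with _ | ⟨b, l⟩
  · exact (σ 0).elim0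
  have ha : (b :: l)[(σ 0 : ℕ)] = a := hσ.1 0
  refine ⟨(b :: l).take (σ 0), (b :: l).drop (σ 0 + 1), ?_, hσ.disjoint_of_mem_take, ?_⟩
  · rw [← ha, ← List.drop_eq_getElem_cons, List.take_append_drop]
  · rw [← List.eraseIdx_eq_take_drop_succ]
    exact hσ.sameConflictOrder_eraseIdx

end SameConflictOrder

theorem Swap.eqvGen_of_sameConflictOrder {l₁ l₂ : List Instr}
    (h : SameConflictOrder pn l₁ l₂) : EqvGen (Swap pn) l₁ l₂ := by
  induction l₁ generalizing l₂ with
  | nil =>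
    obtain ⟨σ, -⟩ := h
    rw [List.eq_nil_of_length_eq_zero (Fin.equiv_iff_eq.mp ⟨σ⟩).symm]
    exact .refl _
  | cons a t ih =>
    obtain ⟨u, v, rfl, hu, h⟩ := h.exists_of_cons_left
    exact .trans _ _ _ (Swap.eqvGen_cons a (ih h)) (.symm _ _ (Swap.eqvGen_append_cons hu v))

theorem Swap.eqvGen_iff_sameConflictOrder {l₁ l₂ : List Instr} :
    EqvGen (Swap pn) l₁ l₂ ↔ SameConflictOrder pn l₁ l₂ :=
  ⟨SameConflictOrder.of_eqvGen, Swap.eqvGen_of_sameConflictOrder⟩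

end

theorem swap_reachability_congruence_and_characterization
    {Instr Name : Type*} (pn : Instr → Finset Name) :
    (∀ l₁ l₂ l₁' l₂' : List Instr,
      Relation.EqvGen (Swap pn) l₁ l₂ → Relation.EqvGen (Swap pn) l₁' l₂' →
        Relation.EqvGen (Swap pn) (l₁ ++ l₁') (l₂ ++ l₂')) ∧
    (∀ l₁ l₂ : List Instr,
      Relation.EqvGen (Swap pn) l₁ l₂ ↔
        ∃ σ : Fin l₁.length ≃ Fin l₂.length,
          (∀ i : Fin l₁.length, l₂.get (σ i) = l₁.get i) ∧
          ∀ i j : Fin l₁.length, i < j →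
            ¬ Disjoint (pn (l₁.get i)) (pn (l₁.get j)) → σ i < σ j) :=
  ⟨fun _ _ _ _ => Swap.eqvGen_append, fun _ _ => Swap.eqvGen_iff_sameConflictOrder⟩
end
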